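/- arXiv:1009.1817 — 4 statements merged into one kernel-verified Lean document; each statement's English description precedes it below -/
import Mathlib

section
/- For every n ≥ 1, the (n+1)-st Eulerian polynomial satisfies E_{n+1}(t) = Σ_{I ⊆ S} ((n+1)!/|W_I|) (t-1)^{|I|}, where the sum is over all subsets I of the set S of simple transpositions of S_{n+1} and W_I is the parabolic subgroup generated by I. -/
/-!
Call `ρ ∈ S_{n+1}` `I`-ascending if it ascends at every position of `I`. Every left coset
`σ W_I` contains exactly one `I`-ascending permutation. Existence: the element of the coset
maximizing `∑ x · ρ(x)` has no descent in `I`, since right multiplication by `s_i` would remove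
it and increase the weight. Uniqueness: `W_I` preserves the blocks of consecutive positions
linked by `I`, and an `I`-ascending permutation is increasing on each block. Hence
`(n+1)!/|W_I|` counts the permutations whose ascent set contains `I`, and
`∑_{I ⊆ Asc ρ} (t-1)^{|I|} = t^{|Asc ρ|}`; reversing the values exchanges ascents and descents.
-/

open Polynomial Finset

/-- Number of descents of a permutation of `Fin m`. -/
noncomputable def des {m : ℕ} (σ : Equiv.Perm (Fin m)) : ℕ :=
  Nat.card {i : Fin m // ∃ h : (i : ℕ) + 1 < m, σ ⟨(i : ℕ) + 1, h⟩ < σ i}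

/-- The `m`-th Eulerian polynomial `∑_{σ ∈ S_m} t^{des σ}` (over `ℚ`). -/
noncomputable def Euler (m : ℕ) : Polynomial ℚ :=
  ∑ σ : Equiv.Perm (Fin m), X ^ des σ

/-- The simple transposition `s_{i+1} = (i+1, i+2)` in `S_{n+1}`. -/
def sT {n : ℕ} (i : Fin n) : Equiv.Perm (Fin (n + 1)) :=
  Equiv.swap i.castSucc i.succ

/-- The standard parabolic subgroup of `S_{n+1}` generated by a set of simple
transpositions (indexed by `A ⊆ Fin n`). -/
def Wsub {n : ℕ} (A : Finset (Fin n)) : Subgroup (Equiv.Perm (Fin (n + 1))) :=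
  Subgroup.closure (sT '' (A : Set (Fin n)))

theorem Fin.strictMonoOn_Icc_of_lt_succ {n : ℕ} {α : Type*} [Preorder α] {f : Fin (n + 1) → α}
    {x y : Fin (n + 1)} (h : ∀ j : Fin n, x ≤ j.castSucc → j.succ ≤ y → f j.castSucc < f j.succ) :
    StrictMonoOn f (Set.Icc x y) := by
  refine strictMonoOn_of_lt_succ Set.ordConnected_Icc fun a ha hxa hay => ?_
  obtain ⟨j, rfl⟩ : ∃ j : Fin n, j.castSucc = a :=
    Fin.exists_castSucc_eq.mpr fun h' => ha (h' ▸ fun _ _ => Fin.le_last _)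
  rw [Fin.orderSucc_castSucc] at hay ⊢
  exact h j hxa.1 hay.2

theorem Equiv.Perm.eq_one_of_strictMono {α : Type*} [LinearOrder α] [WellFoundedLT α]
    {w : Equiv.Perm α} (hw : StrictMono w) : w = 1 :=
  Equiv.ext fun x =>
    DFunLike.congr_fun
      (Subsingleton.elim (hw.orderIsoOfSurjective w w.surjective) (OrderIso.refl _)) x

theorem Subgroup.natCard_div_natCard_eq_index {G : Type*} [Group G] [Finite G] (H : Subgroup G) :
    (Nat.card G : ℚ) / Nat.card H = H.index := by
  rw [div_eq_iff (by exact_mod_cast Nat.card_pos.ne'), ← Subgroup.index_mul_card]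
  push_cast
  rfl

variable {n : ℕ}

def ascents (σ : Equiv.Perm (Fin (n + 1))) : Finset (Fin n) :=
  univ.filter fun i => σ i.castSucc < σ i.succ

@[simp]
theorem mem_ascents {σ : Equiv.Perm (Fin (n + 1))} {i : Fin n} :
    i ∈ ascents σ ↔ σ i.castSucc < σ i.succ := by
  simp [ascents]

theorem des_revPerm_mul (σ : Equiv.Perm (Fin (n + 1))) :
    des (Fin.revPerm * σ) = #(ascents σ) := by
  rw [ascents, ← Fintype.card_subtype, ← Nat.card_eq_fintype_card, des]
  refine Nat.card_congr
    { toFun := fun j => ⟨⟨j.1, by obtain ⟨h, -⟩ := j.2; omega⟩, ?_⟩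
      invFun := fun i => ⟨i.1.castSucc, by simp, ?_⟩
      left_inv := fun j => Subtype.ext rfl
      right_inv := fun i => Subtype.ext rfl }
  · obtain ⟨-, hlt⟩ := j.2
    simpa [Fin.rev_lt_rev] using hlt
  · simp only [Equiv.Perm.mul_apply, Fin.revPerm_apply, Fin.rev_lt_rev]
    exact i.2

/-- Permutations mapping each initial segment `{x | x ≤ j}` with `j ∉ I` onto itself, i.e.
preserving the blocks of consecutive positions linked by `I`. -/
def blockStabilizer (I : Finset (Fin n)) : Subgroup (Equiv.Perm (Fin (n + 1))) where
  carrier := {w | ∀ j ∉ I, ∀ x, w x ≤ j.castSucc ↔ x ≤ j.castSucc}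
  one_mem' _ _ _ := Iff.rfl
  mul_mem' ha hb j hj x := (ha j hj _).trans (hb j hj x)
  inv_mem' {w} hw j hj x := by
    simpa using (hw j hj (w⁻¹ x)).symm

theorem sT_mem_blockStabilizer {I : Finset (Fin n)} {i : Fin n} (hi : i ∈ I) :
    sT i ∈ blockStabilizer I := by
  intro j hj x
  have hij : (i : ℕ) ≠ j := fun h => hj (Fin.ext h ▸ hi)
  simp only [sT, Equiv.swap_apply_def]
  split_ifs <;> subst_vars <;>
    simp only [Fin.le_iff_val_le_val, Fin.val_succ, Fin.val_castSucc] <;> omega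

theorem Wsub_le_blockStabilizer (I : Finset (Fin n)) : Wsub I ≤ blockStabilizer I :=
  (Subgroup.closure_le _).mpr <| by
    rintro _ ⟨i, hi, rfl⟩
    exact sT_mem_blockStabilizer hi

theorem eq_one_of_mem_blockStabilizer {I : Finset (Fin n)} {ρ u : Equiv.Perm (Fin (n + 1))}
    (hu : u ∈ blockStabilizer I) (hρ : I ⊆ ascents ρ) (hρu : I ⊆ ascents (ρ * u)) : u = 1 := by
  have hcut : ∀ j ∉ I, ∀ x, u x ≤ j.castSucc ↔ x ≤ j.castSucc := hu
  refine Equiv.Perm.eq_one_of_strictMono (Fin.strictMono_iff_lt_succ.mpr fun i => ?_)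
  by_cases hi : i ∈ I
  · refine lt_of_le_of_ne (not_lt.mp fun hlt => ?_)
      (u.injective.ne (Fin.castSucc_lt_succ (i := i)).ne)
    -- `u` preserves blocks, so every position between `u i.succ` and `u i.castSucc` is in `I`
    have hmono : StrictMonoOn ρ (Set.Icc (u i.succ) (u i.castSucc)) :=
      Fin.strictMonoOn_Icc_of_lt_succ fun j hj₁ hj₂ => mem_ascents.mp <| hρ <| by
        by_contra hj
        have h₁ : i.succ ≤ j.castSucc := (hcut j hj _).mp hj₁
        have h₂ : ¬i.castSucc ≤ j.castSucc := fun h =>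
          (Fin.castSucc_lt_iff_succ_le.mpr hj₂).not_ge ((hcut j hj _).mpr h)
        simp only [Fin.le_iff_val_le_val, Fin.val_succ, Fin.val_castSucc] at h₁ h₂
        omega
    exact (hmono ⟨le_rfl, hlt.le⟩ ⟨hlt.le, le_rfl⟩ hlt).asymm (mem_ascents.mp (hρu hi))
  · have h₁ := (hcut i hi i.castSucc).mpr le_rfl
    have h₂ := (hcut i hi i.succ).not.mpr (Fin.castSucc_lt_succ (i := i)).not_ge
    exact h₁.trans_lt (not_le.mp h₂)

def positionWeight {m : ℕ} (w : Equiv.Perm (Fin m)) : ℤ :=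
  ∑ x : Fin m, ((x : ℕ) : ℤ) * ((w x : ℕ) : ℤ)

theorem positionWeight_mul_sT (w : Equiv.Perm (Fin (n + 1))) (i : Fin n) :
    positionWeight (w * sT i) = positionWeight w + ((w i.castSucc : ℤ) - w i.succ) := by
  have hswap : ∀ x, x ≠ i.castSucc ∧ x ≠ i.succ →
      (((Equiv.swap i.castSucc i.succ x : ℕ) : ℤ) - (x : ℕ)) * (w x : ℕ) = 0 := fun x hx => by
    simp [Equiv.swap_apply_of_ne_of_ne hx.1 hx.2]
  rw [← sub_eq_iff_eq_add', positionWeight, positionWeight]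
  simp only [Equiv.Perm.mul_apply]
  rw [← Equiv.sum_comp (sT i) fun x : Fin (n + 1) => ((x : ℕ) : ℤ) * ((w (sT i x) : ℕ) : ℤ),
    ← Finset.sum_sub_distrib]
  simp only [sT, Equiv.swap_apply_self, ← sub_mul]
  rw [Fintype.sum_eq_add _ _ (Fin.castSucc_lt_succ (i := i)).ne hswap]
  simp only [Equiv.swap_apply_left, Equiv.swap_apply_right, Fin.val_succ, Fin.val_castSucc]
  push_cast
  ring

theorem exists_mem_Wsub_subset_ascents_mul (I : Finset (Fin n)) (σ : Equiv.Perm (Fin (n + 1))) :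
    ∃ w ∈ Wsub I, I ⊆ ascents (σ * w) := by
  obtain ⟨w, hw, hmax⟩ := Set.exists_max_image (Wsub I : Set (Equiv.Perm (Fin (n + 1))))
    (fun w => positionWeight (σ * w)) (Set.toFinite _) ⟨1, (Wsub I).one_mem⟩
  refine ⟨w, hw, fun i hi => mem_ascents.mpr ?_⟩
  -- otherwise multiplying by `sT i ∈ Wsub I` would remove the descent and increase the weight
  by_contra hdes
  have hlt : (σ * w) i.succ < (σ * w) i.castSucc :=
    lt_of_le_of_ne (not_lt.mp hdes) ((σ * w).injective.ne (Fin.castSucc_lt_succ (i := i)).ne')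
  have hle := hmax (w * sT i) ((Wsub I).mul_mem hw (Subgroup.subset_closure ⟨i, hi, rfl⟩))
  rw [← mul_assoc, positionWeight_mul_sT] at hle
  have : ((σ * w) i.succ : ℕ) < (σ * w) i.castSucc := hlt
  omega

theorem card_filter_subset_ascents (I : Finset (Fin n)) :
    #(univ.filter fun ρ : Equiv.Perm (Fin (n + 1)) => I ⊆ ascents ρ) = (Wsub I).index := by
  rw [Subgroup.index_eq_card, ← Fintype.card_subtype, ← Nat.card_eq_fintype_card]
  refine Nat.card_eq_of_bijective (fun ρ => (ρ.1 : Equiv.Perm (Fin (n + 1)) ⧸ Wsub I)) ⟨?_, ?_⟩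
  · rintro ⟨ρ₁, h₁⟩ ⟨ρ₂, h₂⟩ h
    have hu : ρ₁⁻¹ * ρ₂ ∈ blockStabilizer I := Wsub_le_blockStabilizer I (QuotientGroup.eq.mp h)
    have h₂' : I ⊆ ascents (ρ₁ * (ρ₁⁻¹ * ρ₂)) := by rwa [mul_inv_cancel_left]
    exact Subtype.ext (inv_mul_eq_one.mp (eq_one_of_mem_blockStabilizer hu h₁ h₂'))
  · intro q
    obtain ⟨σ, rfl⟩ := QuotientGroup.mk_surjective q
    obtain ⟨w, hw, hasc⟩ := exists_mem_Wsub_subset_ascents_mul I σ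
    exact ⟨⟨σ * w, hasc⟩, QuotientGroup.mk_mul_of_mem σ hw⟩

theorem euler_eq_sum_X_pow_card_ascents :
    Euler (n + 1) = ∑ ρ : Equiv.Perm (Fin (n + 1)), X ^ #(ascents ρ) := by
  rw [Euler, ← Equiv.sum_comp (Equiv.mulLeft Fin.revPerm)]
  simp only [Equiv.coe_mulLeft, des_revPerm_mul]

theorem Finset.sum_powerset_sub_one_pow {ι R : Type*} [CommRing R] (a : R) (s : Finset ι) :
    ∑ t ∈ s.powerset, (a - 1) ^ #t = a ^ #s := by
  simpa using Finset.sum_pow_mul_eq_add_pow (a - 1) 1 s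

theorem eulerian_sum_over_parabolics_general (n : ℕ) :
    Euler (n + 1) =
      ∑ I : Finset (Fin n),
        (((n + 1).factorial : ℚ) / (Nat.card ↥(Wsub I) : ℚ)) • (X - 1) ^ I.card := by
  have hindex (I : Finset (Fin n)) : ((n + 1).factorial : ℚ) / Nat.card (Wsub I) =
      #(univ.filter fun ρ : Equiv.Perm (Fin (n + 1)) => I ⊆ ascents ρ) := by
    rw [card_filter_subset_ascents, ← Subgroup.natCard_div_natCard_eq_index, Nat.card_perm,
      Nat.card_fin]
  calc Euler (n + 1) = ∑ ρ : Equiv.Perm (Fin (n + 1)), X ^ #(ascents ρ) :=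
        euler_eq_sum_X_pow_card_ascents
    _ = ∑ ρ : Equiv.Perm (Fin (n + 1)), ∑ I ∈ (ascents ρ).powerset, (X - 1) ^ #I := by
        simp only [Finset.sum_powerset_sub_one_pow]
    _ = ∑ I : Finset (Fin n), ∑ ρ ∈ univ.filter (I ⊆ ascents ·), (X - 1) ^ #I :=
        Finset.sum_comm' (by simp)
    _ = _ := by simp only [sum_const, hindex, Nat.cast_smul_eq_nsmul]

theorem eulerian_sum_over_parabolics (n : ℕ) (hn : 1 ≤ n) :
    Euler (n + 1) =
      ∑ I : Finset (Fin n),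
        (((n + 1).factorial : ℚ) / (Nat.card ↥(Wsub I) : ℚ)) • (X - 1) ^ I.card :=
  eulerian_sum_over_parabolics_general n
end

section
/- Let n ≥ 2 and S = {s_1,...,s_n} be the simple transpositions of S_{n+1}. Let M_0 = {A ⊆ S : s_{n-1} ∈ A}. Then Σ_{A ⊆ M_0} ((n+1)!/|W_A|) (t-1)^{|A|} = E_{n+1}(t) - (n(n+1)/2)(t+1) E_{n-1}(t). -/
open Polynomial Finset

/-! Every left coset `σ W_A` contains exactly one permutation with an ascent at each position
of `A`: one maximising `∑ p, p * σ p` (swapping a descent inside `A` raises this sum), and only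
one, because `W_A` preserves the blocks of `A`, on each of which such a representative is
increasing. So `(n+1)!/|W_A|` counts these representatives, and expanding
`t ^ k = ∑_{B ⊆ [k]} (t - 1) ^ |B|` gives, for every `T ⊆ S`,
`∑_{A ⊆ T} ((n+1)!/|W_A|) (t-1)^|A| = ∑_σ t ^ |T ∩ Asc σ| = ∑_σ t ^ |T ∩ Des σ|`, the last
step by reversing the values of `σ`.
The left side of the theorem is the difference of the cases `T = S`, which is `E_{n+1}(t)`,
and `T = S ∖ {s_{n-1}}`. In the latter the descent between positions `n-1` and `n` is ignored,
so `σ` splits into the set of its first `n-1` values and the patterns of its first `n-1` and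
last two values, giving `C(n+1, 2) E_{n-1}(t) E_2(t)`.
-/

open Equiv

namespace Equiv.Perm

variable {n : ℕ}

def ascents (σ : Perm (Fin (n + 1))) : Finset (Fin n) := {i | σ i.castSucc < σ i.succ}

def descents (σ : Perm (Fin (n + 1))) : Finset (Fin n) := {i | σ i.succ < σ i.castSucc}

@[simp] lemma mem_ascents {σ : Perm (Fin (n + 1))} {i : Fin n} :
    i ∈ σ.ascents ↔ σ i.castSucc < σ i.succ := by simp [ascents]

@[simp] lemma mem_descents {σ : Perm (Fin (n + 1))} {i : Fin n} :
    i ∈ σ.descents ↔ σ i.succ < σ i.castSucc := by simp [descents]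

lemma ascents_revPerm_mul (σ : Perm (Fin (n + 1))) : (Fin.revPerm * σ).ascents = σ.descents := by
  ext i; simp

lemma sum_pow_card_inter_ascents {R : Type*} [CommSemiring R] (x : R) (T : Finset (Fin n)) :
    ∑ σ : Perm (Fin (n + 1)), x ^ #(T ∩ σ.ascents) =
      ∑ σ : Perm (Fin (n + 1)), x ^ #(T ∩ σ.descents) :=
  (Fintype.sum_equiv (Equiv.mulLeft Fin.revPerm) _ _ fun σ => by simp [ascents_revPerm_mul]).symm

lemma des_eq_card_descents (σ : Perm (Fin (n + 1))) : des σ = #σ.descents := by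
  rw [des, ← Nat.card_eq_finsetCard]
  refine Nat.card_congr ⟨fun j => ⟨⟨j.1, by obtain ⟨h, -⟩ := j.2; omega⟩, ?_⟩,
    fun i => ⟨i.1.castSucc, by simp, ?_⟩, fun _ => rfl, fun _ => rfl⟩
  · obtain ⟨h, hlt⟩ := j.2; simpa [Fin.succ, Fin.castSucc] using hlt
  · simpa [Fin.succ, Fin.castSucc] using mem_descents.1 i.2

section Shuffle

variable {a b : ℕ}

lemma card_compl_of_card_eq {V : Finset (Fin (a + b))} (hV : #V = a) : #Vᶜ = b := by
  rw [card_compl, hV, Fintype.card_fin, Nat.add_sub_cancel_left]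

def shuffleFun (V : {V : Finset (Fin (a + b)) // #V = a}) (τ : Perm (Fin a)) (π : Perm (Fin b)) :
    Fin (a + b) → Fin (a + b) :=
  Fin.addCases (fun i => V.1.orderEmbOfFin V.2 (τ i))
    (fun j => V.1ᶜ.orderEmbOfFin (card_compl_of_card_eq V.2) (π j))

lemma shuffleFun_injective (V : {V : Finset (Fin (a + b)) // #V = a}) (τ : Perm (Fin a))
    (π : Perm (Fin b)) : Function.Injective (shuffleFun V τ π) := by
  have hV : ∀ i j,
      V.1.orderEmbOfFin V.2 (τ i) ≠ V.1ᶜ.orderEmbOfFin (card_compl_of_card_eq V.2) (π j) :=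
    fun i j h => mem_compl.1 (orderEmbOfFin_mem _ _ (π j)) (h ▸ orderEmbOfFin_mem _ _ _)
  intro x y hxy
  induction x using Fin.addCases <;> induction y using Fin.addCases <;>
    simp only [shuffleFun, Fin.addCases_left, Fin.addCases_right, EmbeddingLike.apply_eq_iff_eq,
      Fin.castAdd_inj, Fin.natAdd_inj] at hxy ⊢
  exacts [hxy, (hV _ _ hxy).elim, (hV _ _ hxy.symm).elim, hxy]

noncomputable def shuffle (V : {V : Finset (Fin (a + b)) // #V = a}) (τ : Perm (Fin a))
    (π : Perm (Fin b)) : Perm (Fin (a + b)) :=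
  .ofBijective _ (Finite.injective_iff_bijective.1 (shuffleFun_injective V τ π))

variable (V : {V : Finset (Fin (a + b)) // #V = a}) (τ : Perm (Fin a)) (π : Perm (Fin b))

@[simp] lemma shuffle_castAdd (i : Fin a) :
    shuffle V τ π (Fin.castAdd b i) = V.1.orderEmbOfFin V.2 (τ i) := by
  simp [shuffle, shuffleFun]

@[simp] lemma shuffle_natAdd (j : Fin b) :
    shuffle V τ π (Fin.natAdd a j) = V.1ᶜ.orderEmbOfFin (card_compl_of_card_eq V.2) (π j) := by
  simp [shuffle, shuffleFun]

lemma image_shuffle_castAdd : univ.image (fun i => shuffle V τ π (Fin.castAdd b i)) = V.1 := by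
  simp_rw [shuffle_castAdd]
  rw [← Function.comp_def, ← image_image, image_univ_equiv, image_orderEmbOfFin_univ]

lemma bijective_shuffle :
    Function.Bijective
      fun x : {V : Finset (Fin (a + b)) // #V = a} × Perm (Fin a) × Perm (Fin b) =>
        shuffle x.1 x.2.1 x.2.2 := by
  refine (Fintype.bijective_iff_injective_and_card _).2 ⟨?_, ?_⟩
  · rintro ⟨V, τ, π⟩ ⟨V', τ', π'⟩ h
    dsimp only at h
    obtain rfl : V = V' := Subtype.ext <| by
      rw [← image_shuffle_castAdd V τ π, ← image_shuffle_castAdd V' τ' π', h]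
    have hτ : τ = τ' := ext fun i => by simpa using congr($h (Fin.castAdd b i))
    have hπ : π = π' := ext fun j => by simpa using congr($h (Fin.natAdd a j))
    rw [hτ, hπ]
  · simp only [Fintype.card_prod, Fintype.card_finset_len, Fintype.card_perm, Fintype.card_fin]
    simpa [mul_assoc] using Nat.choose_mul_factorial_mul_factorial (Nat.le_add_right a b)

end Shuffle

section ShuffleDescents

variable {p q : ℕ} (V : {V : Finset (Fin (p + 1 + (q + 1))) // #V = p + 1})
  (τ : Perm (Fin (p + 1))) (π : Perm (Fin (q + 1)))

-- `(shuffle V τ π :)` builds the permutation of `Fin (p + 1 + (q + 1))` before it is read as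
-- one of `Fin (p + 1 + q + 1)`; otherwise unification would pick `a := p + 1 + q`, `b := 1`.
lemma castAdd_castSucc_mem_descents_shuffle (j : Fin p) :
    Fin.castAdd q j.castSucc ∈ descents (n := p + 1 + q) (shuffle V τ π :) ↔
      j ∈ τ.descents := by
  have h₁ : (Fin.castAdd q j.castSucc).succ = Fin.castAdd (q + 1) j.succ := rfl
  have h₂ : (Fin.castAdd q j.castSucc).castSucc = Fin.castAdd (q + 1) j.castSucc := rfl
  simp [h₁, h₂]

lemma natAdd_mem_descents_shuffle (j : Fin q) :
    Fin.natAdd (p + 1) j ∈ descents (n := p + 1 + q) (shuffle V τ π :) ↔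
      j ∈ π.descents := by
  have h₁ : (Fin.natAdd (p + 1) j).succ = Fin.natAdd (p + 1) j.succ := rfl
  have h₂ : (Fin.natAdd (p + 1) j).castSucc = Fin.natAdd (p + 1) j.castSucc := rfl
  simp [h₁, h₂]

lemma card_descents_shuffle_erase :
    #((descents (n := p + 1 + q) (shuffle V τ π :)).erase ⟨p, by omega⟩) =
      #τ.descents + #π.descents := by
  have hcard : ∀ {m} (s : Finset (Fin m)), #s = ∑ i, if i ∈ s then 1 else 0 := by simp
  rw [hcard, hcard τ.descents, hcard π.descents, Fin.sum_univ_add, Fin.sum_univ_castSucc]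
  have hleft (j : Fin p) : Fin.castAdd q j.castSucc ≠ ⟨p, by omega⟩ := by
    simp [Fin.ext_iff, j.isLt.ne]
  have hlast : Fin.castAdd q (Fin.last p) = ⟨p, by omega⟩ := rfl
  have hright (j : Fin q) : Fin.natAdd (p + 1) j ≠ ⟨p, by omega⟩ := by
    simp [Fin.ext_iff]; omega
  simp only [mem_erase, castAdd_castSucc_mem_descents_shuffle, natAdd_mem_descents_shuffle,
    ne_eq, hleft, hright, hlast, not_false_eq_true, true_and, not_true_eq_false, false_and,
    if_false, add_zero]

end ShuffleDescents

lemma sum_pow_card_descents_erase {R : Type*} [CommSemiring R] (x : R) (p q : ℕ) :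
    ∑ σ : Perm (Fin (p + 1 + (q + 1))),
        x ^ #((descents (n := p + 1 + q) σ).erase ⟨p, by omega⟩) =
      (p + 1 + (q + 1)).choose (p + 1) •
        ((∑ τ : Perm (Fin (p + 1)), x ^ #τ.descents) *
          ∑ π : Perm (Fin (q + 1)), x ^ #π.descents) := by
  rw [← Fintype.sum_bijective _ bijective_shuffle
    (fun v => x ^ #v.2.1.descents * x ^ #v.2.2.descents) _
    fun v => by rw [← pow_add, card_descents_shuffle_erase]]
  simp only [Fintype.sum_prod_type, sum_const, card_univ, Fintype.card_finset_len, Fintype.card_fin,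
    sum_mul_sum]

end Equiv.Perm

lemma sum_pow_card_powerset {α R : Type*} [CommSemiring R] (s : Finset α) (y : R) :
    ∑ B ∈ s.powerset, y ^ #B = (y + 1) ^ #s := by
  simpa using sum_pow_mul_eq_add_pow y 1 s

lemma sum_powerset_card_subset_nsmul {ι α R : Type*} [Fintype ι] [DecidableEq α]
    [CommSemiring R]
    (S : ι → Finset α) (T : Finset α) (y : R) :
    ∑ B ∈ T.powerset, #{i | B ⊆ S i} • y ^ #B = ∑ i, (y + 1) ^ #(T ∩ S i) := by
  simp_rw [card_filter, sum_smul, ite_smul, one_smul, zero_smul]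
  rw [sum_comm]
  refine sum_congr rfl fun i _ => ?_
  rw [← sum_filter, ← sum_pow_card_powerset]
  congr 1
  ext B
  simp only [mem_filter, mem_powerset, subset_inter_iff]

namespace Wsub

variable {n : ℕ} {A : Finset (Fin n)}

def blockIndex (A : Finset (Fin n)) (p : Fin (n + 1)) : ℕ := #{i ∈ Aᶜ | i.castSucc < p}

lemma blockIndex_succ_of_mem {i : Fin n} (hi : i ∈ A) :
    blockIndex A i.succ = blockIndex A i.castSucc := by
  unfold blockIndex
  congr 1
  ext j
  simp only [mem_filter, mem_compl, Fin.castSucc_lt_succ_iff, Fin.castSucc_lt_castSucc_iff]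
  constructor
  · rintro ⟨hj, hji⟩
    exact ⟨hj, lt_of_le_of_ne hji (by rintro rfl; exact hj hi)⟩
  · exact fun ⟨hj, hji⟩ => ⟨hj, hji.le⟩

lemma blockIndex_castSucc_lt_succ {i : Fin n} (hi : i ∉ A) :
    blockIndex A i.castSucc < blockIndex A i.succ := by
  refine card_lt_card ⟨fun j => ?_, fun h => ?_⟩
  · simp only [mem_filter]; exact fun h => ⟨h.1, h.2.trans Fin.castSucc_lt_succ⟩
  · simpa using h (by simpa using hi : i ∈ {j ∈ Aᶜ | j.castSucc < i.succ})

lemma blockIndex_sT {i : Fin n} (hi : i ∈ A) (p : Fin (n + 1)) :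
    blockIndex A (sT i p) = blockIndex A p := by
  unfold sT
  rw [Equiv.swap_apply_def]
  split_ifs with h₁ h₂
  · rw [h₁, blockIndex_succ_of_mem hi]
  · rw [h₂, blockIndex_succ_of_mem hi]
  · rfl

lemma blockIndex_apply_of_mem {w : Perm (Fin (n + 1))} (hw : w ∈ Wsub A) (p : Fin (n + 1)) :
    blockIndex A (w p) = blockIndex A p := by
  induction hw using Subgroup.closure_induction generalizing p with
  | mem g hg => obtain ⟨i, hi, rfl⟩ := hg; exact blockIndex_sT hi p
  | one => rfl
  | mul g h _ _ hg hh => rw [Perm.mul_apply, hg, hh]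
  | inv g _ hg => simpa using (hg (g⁻¹ p)).symm

lemma strictMono_toLex_blockIndex {σ : Perm (Fin (n + 1))} (hσ : A ⊆ σ.ascents) :
    StrictMono fun p => toLex (blockIndex A p, σ p) := by
  refine Fin.strictMono_iff_lt_succ.2 fun i => Prod.Lex.toLex_lt_toLex.2 ?_
  by_cases hi : i ∈ A
  · exact .inr ⟨(blockIndex_succ_of_mem hi).symm, Perm.mem_ascents.1 (hσ hi)⟩
  · exact .inl (blockIndex_castSucc_lt_succ hi)

lemma eq_one_of_subset_ascents {r w : Perm (Fin (n + 1))} (hw : w ∈ Wsub A)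
    (hr : A ⊆ r.ascents) (hrw : A ⊆ (r * w).ascents) : w = 1 := by
  have hkey := strictMono_toLex_blockIndex hr
  -- `w` preserves block indices, so the sort key of `r * w` is that of `r` composed with `w`
  have hw_mono : StrictMono w := fun p q hpq => hkey.lt_iff_lt.1 <| by
    simpa [blockIndex_apply_of_mem hw] using strictMono_toLex_blockIndex hrw hpq
  ext p
  rw [hw_mono.apply_eq]
  rfl

def potential (σ : Perm (Fin (n + 1))) : ℤ := ∑ p : Fin (n + 1), (p : ℤ) * σ p

lemma potential_mul_swap (σ : Perm (Fin (n + 1))) {a b : Fin (n + 1)} (hab : a ≠ b) :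
    potential (σ * swap a b) = potential σ + ((b : ℤ) - a) * ((σ a : ℤ) - σ b) := by
  have hdiff : potential (σ * swap a b) - potential σ =
      (a : ℤ) * ((σ b : ℤ) - σ a) + (b : ℤ) * ((σ a : ℤ) - σ b) := by
    rw [potential, potential, ← sum_sub_distrib, Fintype.sum_eq_add a b hab]
    · simp [swap_apply_left, swap_apply_right, mul_sub]
    · rintro p ⟨hpa, hpb⟩
      simp [swap_apply_of_ne_of_ne hpa hpb]
  linear_combination hdiff

lemma sT_mem {i : Fin n} (hi : i ∈ A) : sT i ∈ Wsub A :=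
  Subgroup.subset_closure ⟨i, hi, rfl⟩

lemma exists_mem_subset_ascents (σ : Perm (Fin (n + 1))) :
    ∃ w ∈ Wsub A, A ⊆ (σ * w).ascents := by
  classical
  obtain ⟨w, hw, hmax⟩ := exists_max_image {w | w ∈ Wsub A} (fun w => potential (σ * w))
    ⟨1, by simp [one_mem]⟩
  rw [mem_filter] at hw
  refine ⟨w, hw.2, fun i hi => Perm.mem_ascents.2 ?_⟩
  by_contra! hdes
  have hlt : (σ * w) i.succ < (σ * w) i.castSucc :=
    lt_of_le_of_ne hdes ((σ * w).injective.ne (Fin.castSucc_lt_succ).ne')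
  have hle := hmax (w * sT i) (by simpa using mul_mem hw.2 (sT_mem hi))
  rw [← mul_assoc, sT, potential_mul_swap _ (Fin.castSucc_lt_succ).ne] at hle
  have : (0 : ℤ) <
      ((i.succ : ℤ) - i.castSucc) * (((σ * w) i.castSucc : ℤ) - (σ * w) i.succ) :=
    mul_pos (by simp) (by simpa using hlt)
  linarith

lemma index_eq_card (A : Finset (Fin n)) :
    (Wsub A).index = #{σ : Perm (Fin (n + 1)) | A ⊆ σ.ascents} := by
  rw [Subgroup.index, ← Nat.card_eq_finsetCard]
  refine (Nat.card_congr (Equiv.ofBijective (fun r => (r.1 : Perm (Fin (n + 1)) ⧸ Wsub A))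
    ⟨fun r s hrs => ?_, fun x => ?_⟩)).symm
  · obtain ⟨r, hr⟩ := r
    obtain ⟨s, hs⟩ := s
    simp only [mem_filter, mem_univ, true_and] at hr hs
    have hw := QuotientGroup.eq.1 hrs
    have := eq_one_of_subset_ascents hw hr (by rwa [mul_inv_cancel_left])
    exact Subtype.ext (inv_mul_eq_one.1 this)
  · induction x using QuotientGroup.induction_on with | H σ => ?_
    obtain ⟨w, hw, hσw⟩ := exists_mem_subset_ascents (A := A) σ
    exact ⟨⟨σ * w, by simpa using hσw⟩, QuotientGroup.eq.2 (by simpa using inv_mem hw)⟩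

lemma factorial_div_card_eq (A : Finset (Fin n)) :
    ((n + 1).factorial : ℚ) / Nat.card (Wsub A) =
      #{σ : Perm (Fin (n + 1)) | A ⊆ σ.ascents} := by
  have h := (Wsub A).card_mul_index
  rw [index_eq_card, Nat.card_perm, Nat.card_fin] at h
  rw [div_eq_iff (Nat.cast_ne_zero.2 Nat.card_pos.ne'), ← h]
  push_cast
  ring

end Wsub

lemma Euler_succ (m : ℕ) : Euler (m + 1) = ∑ σ : Perm (Fin (m + 1)), X ^ #σ.descents := by
  simp only [Euler, Perm.des_eq_card_descents]

lemma Euler_two : Euler 2 = X + 1 := by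
  rw [Euler_succ, show (univ : Finset (Perm (Fin 2))) = {1, swap 0 1} by decide,
    sum_pair (by decide), show #(1 : Perm (Fin 2)).descents = 0 by decide,
    show #(swap 0 1 : Perm (Fin 2)).descents = 1 by decide]
  ring

theorem sum_M0_eq (n : ℕ) (hn : 2 ≤ n) :
    ∑ A ∈ Finset.univ.filter (fun A : Finset (Fin n) =>
        (⟨n - 2, by omega⟩ : Fin n) ∈ A),
      (((n + 1).factorial : ℚ) / (Nat.card ↥(Wsub A) : ℚ)) • (X - 1) ^ A.card
      = Euler (n + 1) - ((n : ℚ) * (n + 1) / 2) • ((X + 1) * Euler (n - 1)) := by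
  obtain ⟨k, rfl⟩ : ∃ k, n = k + 2 := ⟨n - 2, by omega⟩
  set x : Fin (k + 2) := ⟨k, by omega⟩
  set f : Finset (Fin (k + 2)) → ℚ[X] := fun A =>
    #{σ : Perm (Fin (k + 3)) | A ⊆ σ.ascents} • (X - 1) ^ #A
  have hsplit : ∑ A with x ∈ A, f A =
      ∑ A ∈ univ.powerset, f A - ∑ A ∈ (univ.erase x).powerset, f A := by
    rw [eq_sub_iff_add_eq, powerset_univ, ← sum_filter_add_sum_filter_not univ (x ∈ ·)]
    congr 2
    ext A
    simp [subset_erase]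
  calc _ = ∑ A with x ∈ A, f A :=
        sum_congr rfl fun A _ => by rw [Wsub.factorial_div_card_eq, Nat.cast_smul_eq_nsmul]
    _ = ∑ σ : Perm (Fin (k + 3)), X ^ #(univ ∩ σ.descents) -
          ∑ σ : Perm (Fin (k + 3)), X ^ #(univ.erase x ∩ σ.descents) := by
        simp only [hsplit, f, sum_powerset_card_subset_nsmul, sub_add_cancel,
          Perm.sum_pow_card_inter_ascents]
    _ = Euler (k + 3) - (k + 1 + (1 + 1)).choose (k + 1) • (Euler (k + 1) * Euler 2) := by
        simp only [univ_inter, erase_inter, Euler_succ]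
        congr 1
        exact Perm.sum_pow_card_descents_erase X k 1
    _ = _ := by
        rw [Euler_two, Nat.choose_symm_add, ← Nat.cast_smul_eq_nsmul ℚ, Nat.cast_choose_two,
          mul_comm (Euler _)]
        push_cast
        rw [show ((k : ℚ) + 1 + 2) * (k + 1 + 2 - 1) / 2 = (k + 2) * (k + 2 + 1) / 2 by ring]
end

section
/- For all n ≥ 2, the polynomial E_{n+1}(t) - C(n+1,2)·t·E_{n-1}(t) has symmetric coefficients: if h(t) = Σ_{i=0}^{n} h_i t^i = E_{n+1}(t) - C(n+1,2) t E_{n-1}(t), then h_i = h_{n-i} for all 0 ≤ i ≤ n. -/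
open Polynomial Finset

/-- The `m`-th Eulerian polynomial `∑_{σ ∈ S_m} t^{des σ}` (over `ℤ`). -/
noncomputable def EulerZ (m : ℕ) : Polynomial ℤ :=
  ∑ σ : Equiv.Perm (Fin m), X ^ des σ

/-!
Precomposing a permutation of `Fin (k + 1)` with the reversal `i ↦ k - i` turns its descents into
ascents, so `des (σ * rev) = k - des σ` and `E_{k+1}` is fixed by `reflect k`. As `reflect` is
additive and `reflect (N + 2) (X * p) = X * reflect N p` for `natDegree p ≤ N`, both `E_{n+1}` and
`t E_{n-1}` are fixed by `reflect n`, hence so is `h`.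
-/

namespace Polynomial

variable {R : Type*} [Semiring R]

theorem reflect_sum {ι : Type*} (s : Finset ι) (f : ι → R[X]) (N : ℕ) :
    reflect N (∑ i ∈ s, f i) = ∑ i ∈ s, reflect N (f i) := by
  ext; simp only [coeff_reflect, finsetSum_coeff]

theorem reflect_smul {S : Type*} [SMulZeroClass S R] (r : S) (f : R[X]) (N : ℕ) :
    reflect N (r • f) = r • reflect N f := by
  ext; simp only [coeff_reflect, coeff_smul]

theorem reflect_X_mul {p : R[X]} {N : ℕ} (hp : p.natDegree ≤ N) :
    reflect (N + 2) (X * p) = X * reflect N p := by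
  rw [add_comm, reflect_mul _ _ (natDegree_X_le.trans one_le_two) hp, ← pow_one X,
    reflect_monomial, revAt_le one_le_two]
  rfl

theorem coeff_eq_coeff_sub_of_reflect_eq {p : R[X]} {N i : ℕ} (hp : reflect N p = p)
    (hi : i ≤ N) : p.coeff i = p.coeff (N - i) := by
  conv_lhs => rw [← hp, coeff_reflect, revAt_le hi]

end Polynomial

section Descents

variable {k : ℕ}

theorem des_eq_card_filter (σ : Equiv.Perm (Fin (k + 1))) :
    des σ = #{i : Fin k | σ i.succ < σ i.castSucc} := by
  rw [des, ← Fintype.card_subtype, ← Nat.card_eq_fintype_card]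
  exact Nat.card_congr
    { toFun := fun i => ⟨⟨i.1, Nat.lt_of_succ_lt_succ i.2.1⟩, i.2.2⟩
      invFun := fun i => ⟨i.1.castSucc, Nat.succ_lt_succ i.1.2, i.2⟩
      left_inv := fun _ => rfl
      right_inv := fun _ => rfl }

theorem des_le (σ : Equiv.Perm (Fin (k + 1))) : des σ ≤ k := by
  rw [des_eq_card_filter]
  exact (card_le_univ _).trans_eq (Fintype.card_fin k)

theorem card_ascents_eq_sub_des (σ : Equiv.Perm (Fin (k + 1))) :
    #{i : Fin k | σ i.castSucc < σ i.succ} = k - des σ := by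
  have not_descent_iff (i : Fin k) : ¬σ i.succ < σ i.castSucc ↔ σ i.castSucc < σ i.succ := by
    rw [not_lt, (σ.injective.ne (Fin.castSucc_lt_succ (i := i)).ne).le_iff_lt]
  have hpart := card_filter_add_card_filter_not (s := univ) fun i : Fin k => σ i.succ < σ i.castSucc
  simp only [not_descent_iff, card_univ, Fintype.card_fin, ← des_eq_card_filter] at hpart
  omega

theorem des_mul_revPerm (σ : Equiv.Perm (Fin (k + 1))) :
    des (σ * Fin.revPerm) = k - des σ := by
  rw [← card_ascents_eq_sub_des, des_eq_card_filter, card_filter, card_filter,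
    ← Equiv.sum_comp Fin.revPerm]
  simp [Fin.rev_succ, Fin.rev_castSucc]

end Descents

theorem natDegree_EulerZ_le (k : ℕ) : (EulerZ (k + 1)).natDegree ≤ k :=
  natDegree_sum_le_of_forall_le _ _ fun σ _ => (natDegree_X_pow_le _).trans (des_le σ)

theorem reflect_EulerZ (k : ℕ) : reflect k (EulerZ (k + 1)) = EulerZ (k + 1) := by
  rw [EulerZ, reflect_sum, ← Equiv.sum_comp (Equiv.mulRight Fin.revPerm) (fun σ => X ^ des σ)]
  refine sum_congr rfl fun σ _ => ?_
  rw [reflect_monomial, revAt_le (des_le σ), Equiv.coe_mulRight, des_mul_revPerm]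

theorem hpoly_palindromic (n : ℕ) (hn : 2 ≤ n) (i : ℕ) (hi : i ≤ n) :
    (EulerZ (n + 1) - ((n + 1).choose 2 : ℤ) • (X * EulerZ (n - 1))).coeff i
      = (EulerZ (n + 1) - ((n + 1).choose 2 : ℤ) • (X * EulerZ (n - 1))).coeff (n - i) := by
  obtain ⟨k, rfl⟩ : ∃ k, n = k + 2 := ⟨n - 2, by omega⟩
  refine coeff_eq_coeff_sub_of_reflect_eq ?_ hi
  rw [reflect_sub, reflect_smul, reflect_EulerZ, Nat.add_succ_sub_one,
    reflect_X_mul (natDegree_EulerZ_le k), reflect_EulerZ]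
end

section
/- For all n ≥ 2, every coefficient of the polynomial E_{n+1}(t) - C(n+1,2)·t·E_{n-1}(t) is nonnegative (in fact positive in degrees 0 through n). -/
open Polynomial Finset

/-!
The coefficients of `E_m` are the Eulerian numbers `A(m, k)`. Inserting the largest value into
the one-line notation of a permutation of `Fin m` creates a new descent unless it is put at the
end or right after an existing descent, which gives
`A(m + 1, k + 1) = (k + 2) A(m, k + 1) + (m - k) A(m, k)`.

With `m = n - 1`, the coefficient of `t^(j+1)` is `A(m + 2, j + 1) - C(m + 2, 2) A(m, j)`, and
`2 C(m + 2, 2) = (m + 1)(m + 2)`. The theorem follows from the stronger inequality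
`w(m, j) A(m, j) ≤ 2 A(m + 2, j + 1)` with `w(m, j) = (m + 1)(m + 2) + (m - 1 - 2j)² + m + 1`,
proved by induction on `m`: expanding both sides by the recurrence reduces it to two
inequalities between weights, each of which is `x (x - 1) ≥ 0` for an integer `x`.
-/

def eulerian : ℕ → ℕ → ℕ
  | 0, 0 => 1
  | 0, _ + 1 => 0
  | _ + 1, 0 => 1
  | m + 1, k + 1 => (k + 2) * eulerian m (k + 1) + (m - k) * eulerian m k

@[simp]
lemma eulerian_zero_right (m : ℕ) : eulerian m 0 = 1 := by
  cases m <;> rfl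

lemma eulerian_succ_succ (m k : ℕ) :
    eulerian (m + 1) (k + 1) = (k + 2) * eulerian m (k + 1) + (m - k) * eulerian m k :=
  rfl

lemma eulerian_eq_zero_of_le {m k : ℕ} (hm : 1 ≤ m) (hk : m ≤ k) : eulerian m k = 0 := by
  induction m, hm using Nat.le_induction generalizing k with
  | base =>
    obtain ⟨k, rfl⟩ : ∃ k', k = k' + 1 := ⟨k - 1, by omega⟩
    simp [eulerian]
  | succ m hm ih =>
    obtain ⟨k, rfl⟩ : ∃ k', k = k' + 1 := ⟨k - 1, by omega⟩
    rw [eulerian_succ_succ, ih (by omega), ih (by omega)]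
    simp

lemma eulerian_pos {m k : ℕ} (hk : k < m) : 0 < eulerian m k := by
  induction m generalizing k with
  | zero => omega
  | succ m ih =>
    rcases k with _ | k
    · simp
    · rw [eulerian_succ_succ]
      have := ih (show k < m by omega)
      have : 0 < m - k := by omega
      positivity

def descents (f : ℕ → ℕ) (m : ℕ) : Finset ℕ :=
  (range m).filter fun i => i + 1 < m ∧ f (i + 1) < f i

def permVal {m : ℕ} (σ : Equiv.Perm (Fin m)) (i : ℕ) : ℕ :=
  if h : i < m then σ ⟨i, h⟩ else 0

@[simp]
lemma permVal_val {m : ℕ} (σ : Equiv.Perm (Fin m)) (x : Fin m) : permVal σ x = σ x := by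
  simp [permVal]

lemma permVal_lt {m : ℕ} (σ : Equiv.Perm (Fin m)) : ∀ i < m, permVal σ i < m := by
  intro i hi
  simp [permVal, hi]

lemma des_eq_card_descents {m : ℕ} (σ : Equiv.Perm (Fin m)) :
    des σ = #(descents (permVal σ) m) := by
  rw [des, Nat.card_eq_fintype_card, Fintype.card_subtype, card_filter, descents, card_filter,
    ← Fin.sum_univ_eq_sum_range]
  refine sum_congr rfl fun i _ => ?_
  by_cases h : (i : ℕ) + 1 < m <;> simp [h, permVal]

/-- Where a descent at position `p` moves when a maximum is inserted at `j`; a descent at `j - 1`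
lands on the descent created at `j`. -/
def shiftPast (j p : ℕ) : ℕ := if p + 1 < j then p else p + 1

lemma shiftPast_injective {j : ℕ} : (shiftPast j).Injective := by
  intro a b
  simp only [shiftPast]
  split_ifs <;> omega

lemma mem_image_shiftPast {s : Finset ℕ} {j i : ℕ} :
    i ∈ s.image (shiftPast j) ↔
      (i + 1 < j ∧ i ∈ s) ∨ (i = j ∧ 0 < j ∧ j - 1 ∈ s) ∨ (j < i ∧ i - 1 ∈ s) := by
  simp only [mem_image, shiftPast]
  constructor
  · rintro ⟨p, hp, rfl⟩
    split_ifs with h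
    · exact Or.inl ⟨h, hp⟩
    · rcases (not_lt.mp h).eq_or_lt with h' | h'
      · exact Or.inr (Or.inl ⟨h'.symm, by omega, by rw [h', Nat.add_sub_cancel]; exact hp⟩)
      · exact Or.inr (Or.inr ⟨by omega, by simpa using hp⟩)
  · rintro (⟨h, hi⟩ | ⟨rfl, h, hi⟩ | ⟨h, hi⟩)
    · exact ⟨i, hi, if_pos h⟩
    · exact ⟨i - 1, hi, by rw [if_neg (by omega)]; omega⟩
    · exact ⟨i - 1, hi, by rw [if_neg (by omega)]; omega⟩

def insertAt (j M : ℕ) (f : ℕ → ℕ) (i : ℕ) : ℕ :=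
  if i < j then f i else if i = j then M else f (i - 1)

section insertAt

variable {f : ℕ → ℕ} {m j M : ℕ}

lemma mem_descents_insertAt (hj : j ≤ m) (hf : ∀ i < m, f i < M) (i : ℕ) :
    i ∈ descents (insertAt j M f) (m + 1) ↔
      (i + 1 < j ∧ i ∈ descents f m) ∨ (i = j ∧ j < m) ∨ (j < i ∧ i - 1 ∈ descents f m) := by
  unfold descents
  rw [mem_filter, mem_filter, mem_filter]
  simp only [mem_range, insertAt]
  rcases lt_trichotomy (i + 1) j with h | rfl | h
  · simp [h, show i < j by omega]
    omega
  · simp [(hf i (by omega)).not_gt]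
  · rcases (Nat.lt_succ_iff.mp h).eq_or_lt with rfl | h'
    · simp
      exact ⟨fun h => h.2.1, fun h => ⟨hj, h, hf j h⟩⟩
    · simp [show ¬ i < j by omega, show i ≠ j by omega, show ¬ i + 1 < j by omega,
        show i + 1 ≠ j by omega, show i - 1 + 1 = i by omega]
      exact ⟨fun ⟨_, hi, hd⟩ => ⟨h', by omega, hi, hd⟩, fun ⟨_, _, hi, hd⟩ => ⟨hi.le, hi, hd⟩⟩

lemma add_one_lt_of_mem_descents {i : ℕ} (hi : i ∈ descents f m) : i + 1 < m :=
  (mem_filter.mp hi).2.1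

def keepSlots (f : ℕ → ℕ) (m : ℕ) : Finset ℕ :=
  insert m ((descents f m).image (· + 1))

lemma card_keepSlots : #(keepSlots f m) = #(descents f m) + 1 := by
  rw [keepSlots, card_insert_of_notMem, card_image_of_injective _ (add_left_injective 1)]
  simp only [mem_image, not_exists, not_and]
  exact fun p hp h => by have := add_one_lt_of_mem_descents hp; omega

lemma keepSlots_subset_range : keepSlots f m ⊆ range (m + 1) := by
  intro i
  simp only [keepSlots, mem_insert, mem_image, mem_range]
  rintro (rfl | ⟨p, hp, rfl⟩)
  · omega
  · have := add_one_lt_of_mem_descents hp; omega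

lemma mem_keepSlots : j ∈ keepSlots f m ↔ j = m ∨ (0 < j ∧ j - 1 ∈ descents f m) := by
  simp only [keepSlots, mem_insert, mem_image]
  constructor
  · rintro (h | ⟨p, hp, rfl⟩)
    · exact Or.inl h
    · exact Or.inr ⟨by omega, by simpa using hp⟩
  · rintro (h | ⟨h, hp⟩)
    · exact Or.inl h
    · exact Or.inr ⟨j - 1, hp, by omega⟩

lemma descents_insertAt_of_mem_keepSlots (hj : j ≤ m) (hf : ∀ i < m, f i < M)
    (hk : j ∈ keepSlots f m) :
    descents (insertAt j M f) (m + 1) = (descents f m).image (shiftPast j) := by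
  ext i
  rw [mem_descents_insertAt hj hf, mem_image_shiftPast]
  have : j < m ↔ 0 < j ∧ j - 1 ∈ descents f m := by
    refine ⟨fun h => ?_, fun ⟨h, hd⟩ => by have := add_one_lt_of_mem_descents hd; omega⟩
    exact (mem_keepSlots.mp hk).resolve_left h.ne
  tauto

lemma descents_insertAt_of_notMem_keepSlots (hj : j ≤ m) (hf : ∀ i < m, f i < M)
    (hk : j ∉ keepSlots f m) :
    descents (insertAt j M f) (m + 1) = insert j ((descents f m).image (shiftPast j)) := by
  have hjm : j < m := lt_of_le_of_ne hj fun h => hk (mem_keepSlots.mpr (Or.inl h))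
  ext i
  rw [mem_descents_insertAt hj hf, mem_insert, mem_image_shiftPast]
  tauto

lemma card_descents_insertAt (hj : j ≤ m) (hf : ∀ i < m, f i < M) :
    #(descents (insertAt j M f) (m + 1)) =
      #(descents f m) + if j ∈ keepSlots f m then 0 else 1 := by
  split_ifs with hk
  · rw [descents_insertAt_of_mem_keepSlots hj hf hk, card_image_of_injective _ shiftPast_injective,
      add_zero]
  · rw [descents_insertAt_of_notMem_keepSlots hj hf hk, card_insert_of_notMem,
      card_image_of_injective _ shiftPast_injective]
    rw [mem_image_shiftPast]
    rintro (⟨h, -⟩ | ⟨-, h⟩ | ⟨h, -⟩)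
    · omega
    · exact hk (mem_keepSlots.mpr (Or.inr h))
    · omega

end insertAt

/-- The contribution to `E_(m+1)` of a permutation of `Fin m` with `d` descents: `d + 1` of the
`m + 1` slots for the new maximum keep `d` descents, the others add one. -/
noncomputable def insertionPoly (R : Type*) [Semiring R] (m d : ℕ) : R[X] :=
  (d + 1) • X ^ d + (m - d) • X ^ (d + 1)

lemma sum_pow_card_descents_insertAt {R : Type*} [Semiring R] {f : ℕ → ℕ} {m M : ℕ}
    (hf : ∀ i < m, f i < M) :
    ∑ j ∈ range (m + 1), (X : R[X]) ^ #(descents (insertAt j M f) (m + 1)) =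
      insertionPoly R m #(descents f m) := by
  set d := #(descents f m)
  have hterm : ∀ j ∈ range (m + 1), (X : R[X]) ^ #(descents (insertAt j M f) (m + 1)) =
      if j ∈ keepSlots f m then X ^ d else X ^ (d + 1) := by
    intro j hj
    rw [card_descents_insertAt (Nat.lt_succ_iff.mp (mem_range.mp hj)) hf]
    split_ifs <;> rfl
  have hcard : #((range (m + 1)).filter (· ∈ keepSlots f m)) = d + 1 := by
    rw [filter_mem_eq_inter, inter_eq_right.mpr keepSlots_subset_range, card_keepSlots]
  have hcard' : #((range (m + 1)).filter (· ∉ keepSlots f m)) = m - d := by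
    have := card_filter_add_card_filter_not (s := range (m + 1)) (· ∈ keepSlots f m)
    rw [card_range, hcard] at this
    omega
  rw [sum_congr rfl hterm, sum_ite, sum_const, sum_const, hcard, hcard', insertionPoly]

/-- Insert the new largest value `m` at position `j` of the one-line notation of `τ`. -/
def insertMax {m : ℕ} (j : Fin (m + 1)) (τ : Equiv.Perm (Fin m)) : Equiv.Perm (Fin (m + 1)) :=
  (finSuccEquiv' j).trans ((Equiv.optionCongr τ).trans (finSuccEquiv' (Fin.last m)).symm)

section insertMax

variable {m : ℕ}

@[simp]
lemma insertMax_apply_self (j : Fin (m + 1)) (τ : Equiv.Perm (Fin m)) :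
    insertMax j τ j = Fin.last m := by
  simp [insertMax]

@[simp]
lemma insertMax_apply_succAbove (j : Fin (m + 1)) (τ : Equiv.Perm (Fin m)) (k : Fin m) :
    insertMax j τ (j.succAbove k) = (τ k).castSucc := by
  simp [insertMax, Fin.succAbove_last]

lemma insertMax_injective :
    Function.Injective fun p : Fin (m + 1) × Equiv.Perm (Fin m) => insertMax p.1 p.2 := by
  rintro ⟨j, τ⟩ ⟨j', τ'⟩ h
  simp only at h
  obtain rfl : j = j' :=
    (insertMax j' τ').injective (by rw [insertMax_apply_self, ← h, insertMax_apply_self])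
  refine Prod.ext rfl (Equiv.ext fun k => Fin.castSucc_injective m ?_)
  simpa using congrArg (· (j.succAbove k)) h

noncomputable def insertMaxEquiv : Fin (m + 1) × Equiv.Perm (Fin m) ≃ Equiv.Perm (Fin (m + 1)) :=
  Equiv.ofBijective _ <| (Fintype.bijective_iff_injective_and_card _).mpr
    ⟨insertMax_injective, by simp [Fintype.card_perm, Nat.factorial_succ]⟩

lemma insertAt_succAbove {f : ℕ → ℕ} {M : ℕ} (j : Fin (m + 1)) (k : Fin m) :
    insertAt j M f (j.succAbove k) = f k := by
  rcases lt_or_ge k.castSucc j with h | h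
  · rw [Fin.succAbove_of_castSucc_lt _ _ h]
    have : (k : ℕ) < j := h
    simp [insertAt, this]
  · rw [Fin.succAbove_of_le_castSucc _ _ h]
    have : (j : ℕ) < k + 1 := Nat.lt_succ_of_le h
    simp [insertAt, this.not_gt, this.ne']

lemma permVal_insertMax (j : Fin (m + 1)) (τ : Equiv.Perm (Fin m)) :
    permVal (insertMax j τ) = insertAt j m (permVal τ) := by
  funext i
  by_cases hi : i < m + 1
  · obtain ⟨x, rfl⟩ : ∃ x : Fin (m + 1), (x : ℕ) = i := ⟨⟨i, hi⟩, rfl⟩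
    rw [permVal_val]
    rcases eq_or_ne x j with rfl | hx
    · simp [insertAt]
    · obtain ⟨k, rfl⟩ := Fin.exists_succAbove_eq hx
      rw [insertMax_apply_succAbove, insertAt_succAbove, permVal_val, Fin.val_castSucc]
  · have : (j : ℕ) < i := by omega
    simp [permVal, insertAt, hi, this.not_gt, this.ne']
    omega

end insertMax

theorem EulerZ_succ (m : ℕ) :
    EulerZ (m + 1) = ∑ τ : Equiv.Perm (Fin m), insertionPoly ℤ m (des τ) := by
  rw [EulerZ, ← insertMaxEquiv.sum_comp, Fintype.sum_prod_type, sum_comm]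
  refine sum_congr rfl fun τ _ => ?_
  rw [des_eq_card_descents τ, ← sum_pow_card_descents_insertAt (permVal_lt τ),
    ← Fin.sum_univ_eq_sum_range]
  simp [insertMaxEquiv, des_eq_card_descents, permVal_insertMax]

lemma coeff_insertionPoly_zero {R : Type*} [Semiring R] (m d : ℕ) :
    (insertionPoly R m d).coeff 0 = (X ^ d : R[X]).coeff 0 := by
  rcases d with _ | d <;> simp [insertionPoly, coeff_X_pow]

lemma coeff_insertionPoly_succ {R : Type*} [Semiring R] (m d k : ℕ) :
    (insertionPoly R m d).coeff (k + 1) =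
      (k + 2) • (X ^ d : R[X]).coeff (k + 1) + (m - k) • (X ^ d : R[X]).coeff k := by
  simp only [insertionPoly, coeff_add, coeff_smul, coeff_X_pow, add_left_inj]
  by_cases h : k + 1 = d
  · subst h; simp [add_assoc, one_add_one_eq_two]
  · by_cases h' : k = d
    · subst h'; simp
    · simp [h, h']

theorem coeff_EulerZ (m k : ℕ) : (EulerZ m).coeff k = eulerian m k := by
  induction m generalizing k with
  | zero =>
    rcases k with _ | k <;> simp [EulerZ, des_eq_card_descents, descents, eulerian, coeff_one]
  | succ m ih =>
    have hE : ∀ k, ∑ τ : Equiv.Perm (Fin m), (X ^ des τ : ℤ[X]).coeff k = eulerian m k :=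
      fun k => by rw [← finsetSum_coeff, ← EulerZ, ih]
    rw [EulerZ_succ, finsetSum_coeff]
    rcases k with _ | k
    · simp only [coeff_insertionPoly_zero, hE, eulerian_zero_right]
    · simp only [coeff_insertionPoly_succ, sum_add_distrib, ← smul_sum, hE, eulerian_succ_succ]
      push_cast
      simp

lemma Int.mul_sub_one_nonneg (x : ℤ) : 0 ≤ x * (x - 1) := by
  rcases le_or_gt x 0 with h | h <;> nlinarith

def eulerianWeight (m j : ℕ) : ℤ := (m + 1) * (m + 2) + (m - 1 - 2 * j) ^ 2 + m + 1

lemma eulerianWeight_pos (m j : ℕ) : 0 < eulerianWeight m j := by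
  unfold eulerianWeight; positivity

lemma succ_mul_eulerianWeight_succ_le (m i : ℕ) :
    (i + 2) * eulerianWeight (m + 1) (i + 1) ≤ (i + 3) * eulerianWeight m (i + 1) := by
  have := Int.mul_sub_one_nonneg ((m : ℤ) - 2 - 2 * i)
  unfold eulerianWeight
  push_cast
  nlinarith

lemma sub_mul_eulerianWeight_succ_le (m i : ℕ) :
    ((m - i : ℕ) : ℤ) * eulerianWeight (m + 1) (i + 1) ≤
      ((m + 1 - i : ℕ) : ℤ) * eulerianWeight m i := by
  rcases le_or_gt i m with h | h
  · have := Int.mul_sub_one_nonneg ((m : ℤ) - 2 * i - 1)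
    unfold eulerianWeight
    push_cast [h, show i ≤ m + 1 by omega]
    nlinarith
  · rw [Nat.sub_eq_zero_of_le h.le, Nat.cast_zero, zero_mul]
    exact mul_nonneg (Nat.cast_nonneg _) (eulerianWeight_pos m i).le

theorem eulerianWeight_mul_le {m : ℕ} (hm : 1 ≤ m) (j : ℕ) :
    eulerianWeight m j * eulerian m j ≤ 2 * eulerian (m + 2) (j + 1) := by
  induction m, hm using Nat.le_induction generalizing j with
  | base =>
    rcases j with _ | j
    · decide
    · rw [eulerian_eq_zero_of_le le_rfl (by omega)]
      simp
  | succ m hm ih =>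
    rcases j with _ | i
    · have h0 := ih 0
      rw [show m + 1 + 2 = m + 2 + 1 from rfl, eulerian_succ_succ (m + 2) 0]
      simp only [eulerian_zero_right, Nat.cast_one, mul_one] at h0 ⊢
      unfold eulerianWeight at h0 ⊢
      push_cast at h0 ⊢
      nlinarith [Int.mul_sub_one_nonneg (m : ℤ)]
    · rw [show m + 1 + 2 = m + 2 + 1 from rfl, eulerian_succ_succ, eulerian_succ_succ,
        show m + 2 - (i + 1) = m + 1 - i by omega]
      push_cast
      have h1 := mul_le_mul_of_nonneg_right (succ_mul_eulerianWeight_succ_le m i)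
        (Nat.cast_nonneg (α := ℤ) (eulerian m (i + 1)))
      have h2 := mul_le_mul_of_nonneg_right (sub_mul_eulerianWeight_succ_le m i)
        (Nat.cast_nonneg (α := ℤ) (eulerian m i))
      have h3 := mul_le_mul_of_nonneg_left (ih (i + 1)) (show (0 : ℤ) ≤ i + 3 by positivity)
      have h4 := mul_le_mul_of_nonneg_left (ih i) (Nat.cast_nonneg (α := ℤ) (m + 1 - i))
      linear_combination h1 + h2 + h3 + h4

lemma coeff_zero_sub_smul_X_mul_EulerZ (a : ℤ) (m m' : ℕ) :
    (EulerZ m - a • (X * EulerZ m')).coeff 0 = 1 := by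
  simp [coeff_EulerZ]

lemma coeff_succ_sub_smul_X_mul_EulerZ (a : ℤ) (m m' j : ℕ) :
    (EulerZ m - a • (X * EulerZ m')).coeff (j + 1) = eulerian m (j + 1) - a * eulerian m' j := by
  simp [coeff_EulerZ]

lemma two_mul_sub_choose_mul_eulerian_ge {m : ℕ} (hm : 1 ≤ m) (j : ℕ) :
    (((m : ℤ) - 1 - 2 * j) ^ 2 + m + 1) * eulerian m j ≤
      2 * (eulerian (m + 2) (j + 1) - ((m + 2).choose 2 : ℤ) * eulerian m j) := by
  have hchoose : ((m + 2).choose 2 : ℤ) * 2 = (m + 2) * (m + 1) := by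
    exact_mod_cast (Nat.add_one_mul_choose_eq (m + 1) 1).symm.trans (by simp)
  have := eulerianWeight_mul_le hm j
  unfold eulerianWeight at this
  linear_combination this + (eulerian m j : ℤ) * hchoose

theorem hpoly_coeff_nonneg (n : ℕ) (hn : 2 ≤ n) :
    (∀ i, 0 ≤ (EulerZ (n + 1) - ((n + 1).choose 2 : ℤ) • (X * EulerZ (n - 1))).coeff i) ∧
    (∀ i ≤ n, 0 < (EulerZ (n + 1) - ((n + 1).choose 2 : ℤ) • (X * EulerZ (n - 1))).coeff i) := by
  obtain ⟨m, rfl⟩ : ∃ m, n = m + 1 := ⟨n - 1, by omega⟩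
  have hm : 1 ≤ m := by omega
  rw [Nat.add_sub_cancel]
  refine ⟨fun i => ?_, fun i hi => ?_⟩ <;> rcases i with _ | j <;>
    simp only [coeff_zero_sub_smul_X_mul_EulerZ, coeff_succ_sub_smul_X_mul_EulerZ, zero_lt_one,
      zero_le_one]
  · have := two_mul_sub_choose_mul_eulerian_ge hm j
    nlinarith
  · rcases (Nat.le_of_succ_le_succ hi).lt_or_eq with hj | hj
    · have := two_mul_sub_choose_mul_eulerian_ge hm j
      have := eulerian_pos hj
      nlinarith
    · rw [hj, eulerian_eq_zero_of_le hm le_rfl]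
      simpa using eulerian_pos (Nat.lt_succ_self (m + 1))
end
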